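/- Let ι be a nonempty finite type, let x : ι → ℝ be nonnegative weights with ∑_{y ∈ ι} x(y) = 1, let N ≥ 1 and Δ ≥ 1 be natural numbers, let η ≥ 1 be a real number, let c : Fin Δ → ℝ be strictly positive constants, and let Φ : Fin N → ι → Fin Δ → ℝ satisfy c(e) ≤ Φ(m, y, e) ≤ c(e)·(1 + log(1 + 1/η)/(2Δ)) for all m ∈ Fin N, y ∈ ι, e ∈ Fin Δ. Then for every m ∈ Fin N, (∑_{y ∈ ι} x(y)·∏_{e ∈ Fin Δ} Φ(m, y, e)) / (∑_{m' ∈ Fin N} ∑_{y ∈ ι} x(y)·∏_{e ∈ Fin Δ} Φ(m', y, e)) ≥ 1/(√2 · N). -/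

import Mathlib

/-! Every product `∏ₑ Φ m y e` lies between `P = ∏ₑ c e` and `P · (1 + log(1 + 1/η)/(2Δ))^Δ`,
and `(1 + t/Δ)^Δ ≤ exp t` bounds the latter factor by `exp (log (1 + 1/η) / 2) = √(1 + 1/η) ≤ √2`.
Averaging over `x` keeps each numerator in `[P, √2 P]`, so the denominator, a sum of `N` such
terms, is at most `√2 N P` while the numerator is at least `P`. -/

open Finset Real

lemma one_add_div_pow_le_exp {n : ℕ} {t : ℝ} (ht : -n ≤ t) : (1 + t / n) ^ n ≤ exp t := by
  convert one_sub_div_pow_le_exp_neg (n := n) (t := -t) (by linarith) using 2 <;> ring_nf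

lemma one_add_log_div_pow_le_sqrt {a : ℝ} (ha : 1 ≤ a) (n : ℕ) :
    (1 + log a / (2 * n)) ^ n ≤ √a := by
  have hlog : 0 ≤ log a / 2 := by have := log_nonneg ha; positivity
  calc (1 + log a / (2 * n)) ^ n = (1 + log a / 2 / n) ^ n := by rw [div_div]
    _ ≤ exp (log a / 2) := one_add_div_pow_le_exp (by linarith [n.cast_nonneg (α := ℝ)])
    _ = √a := by
      rw [sqrt_eq_rpow, rpow_def_of_pos (by linarith)]
      ring_nf

lemma one_div_mul_card_le_div_sum {α : Type*} [Fintype α] {f : α → ℝ} {P K : ℝ} (hP : 0 < P)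
    (hf : ∀ a, f a ∈ Set.Icc P (K * P)) (a : α) :
    1 / (K * Fintype.card α) ≤ f a / ∑ b, f b := by
  have hsum_le : ∑ b, f b ≤ Fintype.card α * (K * P) :=
    (sum_le_sum fun b _ => (hf b).2).trans_eq (by rw [sum_const, card_univ, nsmul_eq_mul])
  have hsum_pos : 0 < ∑ b, f b :=
    (hP.trans_le (hf a).1).trans_le (single_le_sum (fun b _ => hP.le.trans (hf b).1) (mem_univ a))
  rw [div_le_div_iff₀ (by nlinarith) hsum_pos]
  nlinarith [(hf a).1]

theorem g_m_lower_lemma_general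
    {ι : Type*} [Fintype ι]
    (x : ι → ℝ) (hx : ∀ y, 0 ≤ x y) (hsum : ∑ y, x y = 1)
    (N Δ : ℕ)
    (η : ℝ) (hη : 1 ≤ η)
    (c : Fin Δ → ℝ) (hc : ∀ e, 0 < c e)
    (Φ : Fin N → ι → Fin Δ → ℝ)
    (hΦ : ∀ m y e, c e ≤ Φ m y e ∧
      Φ m y e ≤ c e * (1 + Real.log (1 + 1 / η) / (2 * Δ)))
    (m : Fin N) :
    (∑ y, x y * ∏ e, Φ m y e) / (∑ m' : Fin N, ∑ y, x y * ∏ e, Φ m' y e)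
      ≥ 1 / (Real.sqrt 2 * N) := by
  have hη' : 0 < 1 / η := by positivity
  have hgrowth : (1 + log (1 + 1 / η) / (2 * Δ)) ^ Δ ≤ √2 :=
    (one_add_log_div_pow_le_sqrt (by linarith) Δ).trans
      (sqrt_le_sqrt (by linarith [(div_le_one (by linarith)).2 hη]))
  have hprod : ∀ m' y, ∏ e, Φ m' y e ∈ Set.Icc (∏ e, c e) (√2 * ∏ e, c e) := fun m' y =>
    ⟨prod_le_prod (fun e _ => (hc e).le) fun e _ => (hΦ m' y e).1,
      calc ∏ e, Φ m' y e
          ≤ ∏ e, c e * (1 + log (1 + 1 / η) / (2 * Δ)) :=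
            prod_le_prod (fun e _ => (hc e).le.trans (hΦ m' y e).1) fun e _ => (hΦ m' y e).2
        _ = (1 + log (1 + 1 / η) / (2 * Δ)) ^ Δ * ∏ e, c e := by
            rw [prod_mul_distrib, prod_const, card_univ, Fintype.card_fin, mul_comm]
        _ ≤ √2 * ∏ e, c e := by gcongr; exact prod_nonneg fun e _ => (hc e).le⟩
  have haverage : ∀ m', ∑ y, x y * ∏ e, Φ m' y e ∈ Set.Icc (∏ e, c e) (√2 * ∏ e, c e) :=
    fun m' => (convex_Icc _ _).sum_mem (fun y _ => hx y) hsum fun y _ => hprod m' y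
  simpa using one_div_mul_card_le_div_sum (prod_pos fun e _ => hc e) haverage m

theorem g_m_lower_lemma
    {ι : Type*} [Fintype ι] [Nonempty ι]
    (x : ι → ℝ) (hx : ∀ y, 0 ≤ x y) (hsum : ∑ y, x y = 1)
    (N Δ : ℕ) (hN : 1 ≤ N) (hΔ : 1 ≤ Δ)
    (η : ℝ) (hη : 1 ≤ η)
    (c : Fin Δ → ℝ) (hc : ∀ e, 0 < c e)
    (Φ : Fin N → ι → Fin Δ → ℝ)
    (hΦ : ∀ m y e, c e ≤ Φ m y e ∧
      Φ m y e ≤ c e * (1 + Real.log (1 + 1 / η) / (2 * Δ)))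
    (m : Fin N) :
    (∑ y, x y * ∏ e, Φ m y e) / (∑ m' : Fin N, ∑ y, x y * ∏ e, Φ m' y e)
      ≥ 1 / (Real.sqrt 2 * N) :=
  g_m_lower_lemma_general x hx hsum N Δ η hη c hc Φ hΦ m
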